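/- Let Ω ⊆ ℝ^N be a bounded (ε, r₀)-Reifenberg-flat domain with ε ≤ 20^{−N}. Then every connected component U of Ω satisfies |U| ≥ ω_N (r₀/20)^N, where |U| is the Lebesgue measure of U and ω_N the Lebesgue measure of the unit ball in ℝ^N. -/

import Mathlib

open Metric MeasureTheory Set Filter
open scoped ENNReal InnerProductSpace NNReal Topology

noncomputable section

/-- An `(ε, r₀)`-Reifenberg-flat domain in `ℝ^N`: a nonempty open set such that
(i) at every boundary point and every scale `r ≤ r₀` the boundary is `ε r`-close in
Hausdorff distance to a hyperplane through the point, and (ii) at scale `r₀` the two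
connected components of the complement of the `2 ε r₀`-neighborhood of the hyperplane
inside the ball lie in `Ω` and in `Ωᶜ` respectively. -/
def IsReifenbergFlat {N : ℕ} (ε r₀ : ℝ) (Ω : Set (EuclideanSpace ℝ (Fin N))) : Prop :=
  Ω.Nonempty ∧ IsOpen Ω ∧
    (∀ x ∈ frontier Ω, ∀ r : ℝ, 0 < r → r ≤ r₀ →
      ∃ ν : EuclideanSpace ℝ (Fin N), ‖ν‖ = 1 ∧
        Metric.hausdorffDist (frontier Ω ∩ Metric.ball x r)
          ({y | ⟪ν, y - x⟫_ℝ = 0} ∩ Metric.ball x r) ≤ ε * r) ∧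
    (∀ x ∈ frontier Ω,
      ∃ ν : EuclideanSpace ℝ (Fin N), ‖ν‖ = 1 ∧
        Metric.hausdorffDist (frontier Ω ∩ Metric.ball x r₀)
          ({y | ⟪ν, y - x⟫_ℝ = 0} ∩ Metric.ball x r₀) ≤ ε * r₀ ∧
        {y | 2 * ε * r₀ ≤ ⟪ν, y - x⟫_ℝ} ∩ Metric.ball x r₀ ⊆ Ω ∧
        {y | ⟪ν, y - x⟫_ℝ ≤ -(2 * ε * r₀)} ∩ Metric.ball x r₀ ⊆ Ωᶜ)

/-! If `x ∈ Ω` lies at distance `d < r₀/20` from `Ωᶜ`, take a nearest point `z ∈ ∂Ω`. At scale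
`10d` the boundary near `z` lies within `10εd ≤ d/2` of a hyperplane, so the part of `B(z, 10d)`
beyond height `3d/4` on the side of `x` misses `∂Ω`. It meets `B(x, d) ⊆ Ω`, so it lies in the
component of `x`, and it contains a ball of radius `2d`. Iterating doubles the distance to `Ωᶜ`
within the component of `x` until it exceeds `r₀/20`. -/

section FlatBoundary

variable {E : Type*} [NormedAddCommGroup E] [InnerProductSpace ℝ E]

theorem abs_inner_sub_le_of_hausdorffDist_le {A : Set E} {z ν w : E} {r δ : ℝ} (hν : ‖ν‖ = 1)
    (hA : hausdorffDist (A ∩ ball z r) ({y | ⟪ν, y - z⟫_ℝ = 0} ∩ ball z r) ≤ δ)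
    (hw : w ∈ A ∩ ball z r) : |⟪ν, w - z⟫_ℝ| ≤ δ := by
  set P := {y | ⟪ν, y - z⟫_ℝ = 0} ∩ ball z r
  have hP : P.Nonempty := ⟨z, by simp, mem_ball_self (pos_of_mem_ball hw.2)⟩
  have hfin : hausdorffEDist (A ∩ ball z r) P ≠ ⊤ :=
    hausdorffEDist_ne_top_of_nonempty_of_bounded ⟨w, hw⟩ hP
      (isBounded_ball.subset inter_subset_right) (isBounded_ball.subset inter_subset_right)
  refine le_trans ?_ ((infDist_le_hausdorffDist_of_mem hw hfin).trans hA)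
  refine (le_infDist hP).2 fun p hp => ?_
  calc |⟪ν, w - z⟫_ℝ| = |⟪ν, w - p⟫_ℝ| := by
        rw [← sub_add_sub_cancel w p z, inner_add_right, hp.1, add_zero]
    _ ≤ ‖ν‖ * ‖w - p‖ := abs_real_inner_le_norm ν (w - p)
    _ = dist w p := by rw [hν, one_mul, dist_eq_norm]

theorem convex_halfSpace_inner_sub_ge (u z : E) (a : ℝ) :
    Convex ℝ {w : E | a ≤ ⟪u, w - z⟫_ℝ} := by
  simpa [sub_eq_neg_add] using
    (convex_halfSpace_ge (innerₛₗ ℝ u).isLinear a).translate_preimage_right (-z)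

theorem halfBall_subset_connectedComponentIn {Ω : Set E} (hΩ : IsOpen Ω) {u z y : E}
    {a r δ : ℝ} (hδa : δ < a) (hfr : ∀ w ∈ frontier Ω ∩ ball z r, ⟪u, w - z⟫_ℝ ≤ δ)
    (hy : y ∈ Ω) (hya : a ≤ ⟪u, y - z⟫_ℝ) (hyr : y ∈ ball z r) :
    {w | a ≤ ⟪u, w - z⟫_ℝ} ∩ ball z r ⊆ connectedComponentIn Ω y := by
  have hH := ((convex_halfSpace_inner_sub_ge u z a).inter (convex_ball z r)).isPreconnected
  refine hH.subset_connectedComponentIn ⟨hya, hyr⟩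
    (hH.subset_of_closure_inter_subset hΩ ⟨y, ⟨hya, hyr⟩, hy⟩ ?_)
  rintro w ⟨hwcl, hwa, hwr⟩
  by_contra hwΩ
  have := hfr w ⟨⟨hwcl, by rwa [hΩ.interior_eq]⟩, hwr⟩
  exact (hδa.trans_le hwa).not_ge this

theorem exists_ball_subset_connectedComponentIn_of_hausdorffDist_le {Ω : Set E}
    (hΩ : IsOpen Ω) {ε : ℝ} (hε : ε ≤ 1 / 20) {x z ν : E} (hball : ball x (dist x z) ⊆ Ω)
    (hν : ‖ν‖ = 1)
    (hflat : hausdorffDist (frontier Ω ∩ ball z (10 * dist x z))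
      ({y | ⟪ν, y - z⟫_ℝ = 0} ∩ ball z (10 * dist x z)) ≤ ε * (10 * dist x z)) :
    ∃ c, ball c (2 * dist x z) ⊆ connectedComponentIn Ω x := by
  set d := dist x z
  rcases (dist_nonneg : 0 ≤ d).eq_or_lt with hd | hd
  · exact ⟨x, by simp [d, ← hd]⟩
  obtain ⟨u, hu, hux, hfr⟩ : ∃ u : E, ‖u‖ = 1 ∧ 0 ≤ ⟪u, x - z⟫_ℝ ∧
      ∀ w ∈ frontier Ω ∩ ball z (10 * d), ⟪u, w - z⟫_ℝ ≤ d / 2 := by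
    have hstrip w (hw : w ∈ frontier Ω ∩ ball z (10 * d)) : |⟪ν, w - z⟫_ℝ| ≤ d / 2 :=
      (abs_inner_sub_le_of_hausdorffDist_le hν hflat hw).trans (by nlinarith)
    rcases le_total 0 ⟪ν, x - z⟫_ℝ with h | h
    · exact ⟨ν, hν, h, fun w hw => (le_abs_self _).trans (hstrip w hw)⟩
    · refine ⟨-ν, by rwa [norm_neg], by rw [inner_neg_left]; linarith, fun w hw => ?_⟩
      rw [inner_neg_left]
      exact (neg_le_abs _).trans (hstrip w hw)
  have inner_add_smul (p : E) (t : ℝ) : ⟪u, p + t • u⟫_ℝ = ⟪u, p⟫_ℝ + t := by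
    rw [inner_add_right, real_inner_smul_right, real_inner_self_eq_norm_sq, hu]; ring
  have dist_add_smul (p : E) {t : ℝ} (ht : 0 ≤ t) : dist (p + t • u) p = t := by
    rw [dist_self_add_left, norm_smul, hu, mul_one, Real.norm_of_nonneg ht]
  -- `y` is a point of `B(x, d)` above height `3d/4`, and `B(c, 2d)` lies above height `d`
  set y := x + (3 / 4 * d) • u
  set c := z + (3 * d) • u
  have hyx : dist y x = 3 / 4 * d := dist_add_smul x (by positivity)
  have hcz : dist c z = 3 * d := dist_add_smul z (by positivity)
  have hy : y ∈ connectedComponentIn Ω x :=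
    (convex_ball x d).isPreconnected.subset_connectedComponentIn (mem_ball_self hd) hball
      (mem_ball.2 (by linarith))
  have hyz : 3 / 4 * d ≤ ⟪u, y - z⟫_ℝ := by
    rw [show y - z = (x - z) + (3 / 4 * d) • u by module, inner_add_smul]; linarith
  have hH := halfBall_subset_connectedComponentIn hΩ (by linarith : d / 2 < 3 / 4 * d) hfr
    (hball (mem_ball.2 (by linarith))) hyz
    (mem_ball.2 ((dist_triangle y x z).trans_lt (by linarith)))
  refine ⟨c, fun w hw => connectedComponentIn_eq hy ▸ hH ⟨?_, ?_⟩⟩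
  · have hwc : -⟪u, w - c⟫_ℝ ≤ dist w c := by
      simpa [hu, dist_eq_norm] using (neg_le_abs _).trans (abs_real_inner_le_norm u (w - c))
    rw [mem_ball] at hw
    rw [mem_ofPred_eq, show w - z = (w - c) + (3 * d) • u by module, inner_add_smul]
    linarith
  · exact mem_ball.2 ((dist_triangle w c z).trans_lt (by rw [mem_ball] at hw; linarith))

end FlatBoundary

theorem le_infDist_compl_of_ball_subset {α : Type*} [PseudoMetricSpace α] {Ω : Set α} {x : α}
    {r : ℝ} (hΩ : Ωᶜ.Nonempty) (hr : ball x r ⊆ Ω) : r ≤ infDist x Ωᶜ :=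
  (le_infDist hΩ).2 fun _ hy => not_lt.1 fun h => hy (hr (mem_ball'.2 h))

section Doubling

variable {E : Type*} [SeminormedAddCommGroup E] [NormedSpace ℝ E] {Ω : Set E}

theorem ball_infDist_compl_subset_connectedComponentIn {x : E} (hx : 0 < infDist x Ωᶜ) :
    ball x (infDist x Ωᶜ) ⊆ connectedComponentIn Ω x :=
  (convex_ball x _).isPreconnected.subset_connectedComponentIn (mem_ball_self hx)
    ball_infDist_compl_subset

theorem exists_ball_subset_connectedComponentIn_of_doubling {R : ℝ}
    (hstep : ∀ x ∈ Ω, infDist x Ωᶜ < R →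
      ∃ c, ball c (2 * infDist x Ωᶜ) ⊆ connectedComponentIn Ω x)
    {x : E} (hx : 0 < infDist x Ωᶜ) : ∃ c, ball c R ⊆ connectedComponentIn Ω x := by
  have hΩ : Ωᶜ.Nonempty := nonempty_iff_ne_empty.2 fun h => by simp [h] at hx
  obtain ⟨n, hn⟩ := pow_unbounded_of_one_lt (R / infDist x Ωᶜ) one_lt_two
  rw [div_lt_iff₀ hx] at hn
  induction n generalizing x with
  | zero =>
    exact ⟨x, (ball_subset_ball (by simpa using hn.le)).trans
      (ball_infDist_compl_subset_connectedComponentIn hx)⟩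
  | succ n ih =>
    by_cases hR : R ≤ infDist x Ωᶜ
    · exact ⟨x, (ball_subset_ball hR).trans (ball_infDist_compl_subset_connectedComponentIn hx)⟩
    obtain ⟨c, hc⟩ := hstep x (ball_infDist_compl_subset (mem_ball_self hx)) (not_le.1 hR)
    have hcx : c ∈ connectedComponentIn Ω x := hc (mem_ball_self (by positivity))
    have hxc : 2 * infDist x Ωᶜ ≤ infDist c Ωᶜ :=
      le_infDist_compl_of_ball_subset hΩ (hc.trans (connectedComponentIn_subset _ _))
    obtain ⟨c', hc'⟩ := ih (by linarith) (by rw [pow_succ] at hn; nlinarith)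
    exact ⟨c', connectedComponentIn_eq hcx ▸ hc'⟩

end Doubling

theorem IsReifenbergFlat.exists_ball_two_mul_infDist_subset_connectedComponentIn {N : ℕ}
    {ε r₀ : ℝ} {Ω : Set (EuclideanSpace ℝ (Fin N))} (hΩ : IsReifenbergFlat ε r₀ Ω) (hε : ε ≤ 1 / 20)
    (hΩc : Ωᶜ.Nonempty) {x : EuclideanSpace ℝ (Fin N)} (hx : x ∈ Ω)
    (hxr : infDist x Ωᶜ < r₀ / 20) :
    ∃ c, ball c (2 * infDist x Ωᶜ) ⊆ connectedComponentIn Ω x := by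
  obtain ⟨-, hopen, hflat, -⟩ := hΩ
  obtain ⟨z, hz, hxz⟩ := hopen.isClosed_compl.exists_infDist_eq_dist hΩc x
  have hd : 0 < dist x z :=
    hxz ▸ (hopen.isClosed_compl.notMem_iff_infDist_pos hΩc).1 (not_not_intro hx)
  have hball : ball x (dist x z) ⊆ Ω := hxz ▸ ball_infDist_compl_subset
  have hzfr : z ∈ frontier Ω := by
    refine ⟨closure_mono hball ?_, by rwa [hopen.interior_eq]⟩
    rw [closure_ball x hd.ne']
    exact mem_closedBall'.2 le_rfl
  obtain ⟨ν, hν, hHD⟩ := hflat z hzfr (10 * dist x z) (by positivity) (by linarith)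
  rw [hxz]
  exact exists_ball_subset_connectedComponentIn_of_hausdorffDist_le hopen hε hball hν hHD

theorem component_volume_lower_bound_general {N : ℕ} {ε r₀ : ℝ}
    (hε' : ε ≤ 1 / 20 ^ N) (hr₀ : 0 < r₀)
    {Ω : Set (EuclideanSpace ℝ (Fin N))} (hΩ : IsReifenbergFlat ε r₀ Ω) :
    ∀ x ∈ Ω,
      volume (Metric.ball (0 : EuclideanSpace ℝ (Fin N)) 1) *
          ENNReal.ofReal ((r₀ / 20) ^ N) ≤
        volume (connectedComponentIn Ω x) := by
  intro x hx
  obtain ⟨c, hc⟩ : ∃ c, ball c (r₀ / 20) ⊆ connectedComponentIn Ω x := by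
    rcases Ωᶜ.eq_empty_or_nonempty with hΩc | hΩc
    · rw [compl_empty_iff.1 hΩc, connectedComponentIn_univ,
        PreconnectedSpace.connectedComponent_eq_univ]
      exact ⟨x, subset_univ _⟩
    have hN : N ≠ 0 := by
      rintro rfl
      obtain ⟨y, hy⟩ := hΩc
      exact hy (Subsingleton.elim x y ▸ hx)
    have hε : ε ≤ 1 / 20 :=
      hε'.trans (one_div_le_one_div_of_le (by norm_num) (le_self_pow₀ (by norm_num) hN))
    exact exists_ball_subset_connectedComponentIn_of_doubling
      (fun _ hy hyr => hΩ.exists_ball_two_mul_infDist_subset_connectedComponentIn hε hΩc hy hyr)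
      ((hΩ.2.1.isClosed_compl.notMem_iff_infDist_pos hΩc).1 (not_not_intro hx))
  calc volume (ball (0 : EuclideanSpace ℝ (Fin N)) 1) * ENNReal.ofReal ((r₀ / 20) ^ N)
      = volume (ball c (r₀ / 20)) := by
        rw [Measure.addHaar_ball_of_pos volume c (by positivity), finrank_euclideanSpace_fin,
          mul_comm]
    _ ≤ volume (connectedComponentIn Ω x) := measure_mono hc

/-- **Proposition (volume lower bound for connected components).**
Let `Ω ⊆ ℝ^N` be a bounded `(ε, r₀)`-Reifenberg-flat domain with `ε ≤ 20^{-N}`. Then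
every connected component `U` of `Ω` satisfies `|U| ≥ ω_N (r₀/20)^N`, where `ω_N` is
the volume of the unit ball of `ℝ^N`. -/
theorem component_volume_lower_bound {N : ℕ} {ε r₀ : ℝ}
    (hε : 0 < ε) (hε2 : ε < 1 / 2) (hε' : ε ≤ 1 / 20 ^ N) (hr₀ : 0 < r₀)
    {Ω : Set (EuclideanSpace ℝ (Fin N))} (hΩ : IsReifenbergFlat ε r₀ Ω)
    (hbdd : Bornology.IsBounded Ω) :
    ∀ x ∈ Ω,
      volume (Metric.ball (0 : EuclideanSpace ℝ (Fin N)) 1) *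
          ENNReal.ofReal ((r₀ / 20) ^ N) ≤
        volume (connectedComponentIn Ω x) :=
  component_volume_lower_bound_general hε' hr₀ hΩ
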